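/- Let f : ℝ → ℝ be three times differentiable with |f'''(s)| ≤ M for all s ∈ ℝ. Fix θ ∈ [0,1], dt > 0 and t ∈ ℝ, and set t^{n+1} := t + ((1−θ)/2)·dt and t^n := t − ((1+θ)/2)·dt (so t plays the role of the intermediate time t^{n,θ}). Then the θ-weighted average f^{n,θ} := ((1+θ)/2)·f(t^{n+1}) + ((1−θ)/2)·f(t^n) satisfies |f^{n,θ} − f(t) − (1/8)(1+θ)(1−θ)·dt²·f''(t)| ≤ (M/24)·dt³. -/

import Mathlib

/-!
Expand `f` around `t` to second order, with Lagrange remainder, at `t + w₂ dt` and `t - w₁ dt`,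
where `w₁ = (1 + θ)/2` and `w₂ = (1 - θ)/2`. In the average with weights `w₁, w₂` the first-order
terms cancel, the second-order terms add up to `w₁ w₂ dt² f''(t) / 2`, and the remainders
contribute at most `M |dt|³ w₁ w₂ (w₁² + w₂²) / 6`. With `p = w₁ w₂` this factor is
`p (1 - 2p) ≤ 1/8`, giving even the bound `M |dt|³ / 48`.
-/

open Set

theorem iteratedDerivWithin_eq_iteratedDeriv_of_differentiable {𝕜 F : Type*}
    [NontriviallyNormedField 𝕜] [NormedAddCommGroup F] [NormedSpace 𝕜 F] {f : 𝕜 → F}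
    {s : Set 𝕜} {n : ℕ} (hf : ∀ m < n, Differentiable 𝕜 (iteratedDeriv m f))
    (hs : UniqueDiffOn 𝕜 s) {x : 𝕜} (hx : x ∈ s) :
    iteratedDerivWithin n f s x = iteratedDeriv n f x := by
  induction n generalizing x with
  | zero => simp
  | succ n ih =>
    have ih' : EqOn (iteratedDerivWithin n f s) (iteratedDeriv n f) s :=
      fun y hy => ih (fun m hm => hf m (by omega)) hy
    rw [iteratedDerivWithin_succ, iteratedDeriv_succ, derivWithin_congr ih' (ih' hx),
      ((hf n n.lt_succ_self) x).derivWithin (hs x hx)]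

theorem exists_taylor_two_lagrange {f : ℝ → ℝ}
    (hf : ∀ m < 3, Differentiable ℝ (iteratedDeriv m f)) (t h : ℝ) :
    ∃ ξ, f (t + h) - f t - h * deriv f t - h ^ 2 / 2 * iteratedDeriv 2 f t =
      iteratedDeriv 3 f ξ * h ^ 3 / 6 := by
  rcases eq_or_ne h 0 with rfl | hh
  · exact ⟨t, by simp⟩
  have hne : t ≠ t + h := fun e => hh (by linarith)
  have hs : UniqueDiffOn ℝ (uIcc t (t + h)) := uniqueDiffOn_uIcc hne
  have hwithin : ∀ k ≤ 3, ∀ x ∈ uIcc t (t + h),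
      iteratedDerivWithin k f (uIcc t (t + h)) x = iteratedDeriv k f x :=
    fun k hk x hx =>
      iteratedDerivWithin_eq_iteratedDeriv_of_differentiable (fun m hm => hf m (by omega)) hs hx
  have hC2 : ContDiff ℝ 2 f :=
    contDiff_of_differentiable_iteratedDeriv fun m hm =>
      hf m (Nat.lt_succ_of_le (by exact_mod_cast hm))
  have hD2 : DifferentiableOn ℝ (iteratedDerivWithin 2 f (uIcc t (t + h))) (uIoo t (t + h)) :=
    (hf 2 (by norm_num)).differentiableOn.congr fun x hx =>
      hwithin 2 (by norm_num) x (uIoo_subset_uIcc_self hx)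
  obtain ⟨ξ, hξ, hR⟩ := taylor_mean_remainder_lagrange hne hC2.contDiffOn hD2
  refine ⟨ξ, ?_⟩
  have ht := left_mem_uIcc (a := t) (b := t + h)
  simp only [taylor_within_apply, Finset.sum_range_succ, Finset.sum_range_zero,
    hwithin 0 (by norm_num) t ht, hwithin 1 (by norm_num) t ht, hwithin 2 (by norm_num) t ht,
    hwithin 3 le_rfl ξ (uIoo_subset_uIcc_self hξ), iteratedDeriv_zero, iteratedDeriv_one] at hR
  norm_num [Nat.factorial] at hR
  linear_combination hR

theorem abs_taylor_two_remainder_le {f : ℝ → ℝ} {M : ℝ}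
    (hf : ∀ m < 3, Differentiable ℝ (iteratedDeriv m f))
    (hM : ∀ s, |iteratedDeriv 3 f s| ≤ M) (t h : ℝ) :
    |f (t + h) - f t - h * deriv f t - h ^ 2 / 2 * iteratedDeriv 2 f t| ≤ M * |h| ^ 3 / 6 := by
  obtain ⟨ξ, hξ⟩ := exists_taylor_two_lagrange hf t h
  rw [hξ, abs_div, abs_mul, abs_pow, abs_of_pos (by norm_num : (0 : ℝ) < 6)]
  gcongr
  exact hM ξ

theorem abs_weighted_average_sub_taylor_le {f : ℝ → ℝ} {M : ℝ}
    (hf : ∀ m < 3, Differentiable ℝ (iteratedDeriv m f))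
    (hM : ∀ s, |iteratedDeriv 3 f s| ≤ M) {w₁ w₂ : ℝ} (hw₁ : 0 ≤ w₁) (hw₂ : 0 ≤ w₂)
    (hw : w₁ + w₂ = 1) (t dt : ℝ) :
    |w₁ * f (t + w₂ * dt) + w₂ * f (t - w₁ * dt) - f t
      - w₁ * w₂ * dt ^ 2 / 2 * iteratedDeriv 2 f t| ≤ M / 48 * |dt| ^ 3 := by
  have hM0 : 0 ≤ M := (abs_nonneg _).trans (hM 0)
  have hA := abs_taylor_two_remainder_le hf hM t (w₂ * dt)
  have hB := abs_taylor_two_remainder_le hf hM t (-(w₁ * dt))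
  rw [← sub_eq_add_neg] at hB
  have hweights : w₁ * w₂ * (w₁ ^ 2 + w₂ ^ 2) ≤ 1 / 8 := by
    obtain rfl : w₂ = 1 - w₁ := by linarith
    nlinarith [sq_nonneg (4 * w₁ * (1 - w₁) - 1)]
  calc _ = |w₁ * (f (t + w₂ * dt) - f t - w₂ * dt * deriv f t
              - (w₂ * dt) ^ 2 / 2 * iteratedDeriv 2 f t)
            + w₂ * (f (t - w₁ * dt) - f t - -(w₁ * dt) * deriv f t
              - (-(w₁ * dt)) ^ 2 / 2 * iteratedDeriv 2 f t)| := by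
        congr 1
        linear_combination (f t + w₁ * w₂ * dt ^ 2 / 2 * iteratedDeriv 2 f t) * hw
    _ ≤ w₁ * (M * |w₂ * dt| ^ 3 / 6) + w₂ * (M * |-(w₁ * dt)| ^ 3 / 6) := by
        refine (abs_add_le _ _).trans ?_
        rw [abs_mul, abs_mul, abs_of_nonneg hw₁, abs_of_nonneg hw₂]
        gcongr
    _ = M / 6 * (w₁ * w₂ * (w₁ ^ 2 + w₂ ^ 2)) * |dt| ^ 3 := by
        rw [abs_neg, abs_mul, abs_mul, abs_of_nonneg hw₁, abs_of_nonneg hw₂]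
        ring
    _ ≤ M / 6 * (1 / 8) * |dt| ^ 3 := by gcongr
    _ = M / 48 * |dt| ^ 3 := by ring

/-- Taylor-expansion identity (9) for the θ-family of time discretizations:
the θ-weighted average `f^{n,θ}` equals `f(t) + (1/8)(1+θ)(1-θ) dt² f''(t)`
up to an error of size `(M/24) dt³` when `|f'''| ≤ M`. -/
theorem stmt_0 (f : ℝ → ℝ) (M : ℝ)
    (hf : ∀ n ≤ 2, Differentiable ℝ (iteratedDeriv n f))
    (hM : ∀ s : ℝ, |iteratedDeriv 3 f s| ≤ M)
    (θ dt t : ℝ) (hθ : θ ∈ Set.Icc (0 : ℝ) 1) (hdt : 0 < dt) :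
    |((1 + θ) / 2) * f (t + ((1 - θ) / 2) * dt)
      + ((1 - θ) / 2) * f (t - ((1 + θ) / 2) * dt)
      - f t - (1 / 8) * (1 + θ) * (1 - θ) * dt ^ 2 * iteratedDeriv 2 f t|
      ≤ (M / 24) * dt ^ 3 := by
  obtain ⟨hθ0, hθ1⟩ := hθ
  have hM0 : 0 ≤ M := (abs_nonneg _).trans (hM 0)
  have h := abs_weighted_average_sub_taylor_le (fun m hm => hf m (by omega)) hM
    (w₁ := (1 + θ) / 2) (w₂ := (1 - θ) / 2) (by linarith) (by linarith) (by ring) t dt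
  rw [abs_of_pos hdt] at h
  calc _ = _ := by congr 1; ring
    _ ≤ M / 48 * dt ^ 3 := h
    _ ≤ M / 24 * dt ^ 3 := by gcongr; norm_num
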